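/- For real x with 0 < x < 1, ∑_{n=1}^∞ (H_n^{(2)}/n)(-x)^n = -Li_2(-x) log(1+x) - log(x) log^2(1+x) + (2/3) log^3(1+x) + 2 log(1+x) Li_2(1/(1+x)) + 2 Li_3(1/(1+x)) - 2 ζ(3) + Li_3(-x). -/

import Mathlib

open Real Filter Finset

noncomputable def Li (m : ℕ) (x : ℝ) : ℝ := ∑' n : ℕ, x ^ (n + 1) / (n + 1 : ℝ) ^ m

noncomputable def H (p n : ℕ) : ℝ := ∑ j ∈ Finset.Icc 1 n, 1 / (j : ℝ) ^ p

noncomputable def Hbar (p n : ℕ) : ℝ := ∑ j ∈ Finset.Icc 1 n, (-1 : ℝ) ^ (j - 1) / (j : ℝ) ^ p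

/-
Put F(t) = ∑ₙ H₂(n+1)/(n+1) · t^(n+1). Termwise differentiation and the Cauchy product
∑ₙ H₂(n+1) yⁿ = (∑ₙ yⁿ/(n+1)²)/(1-y) show that s ↦ F(-s) has derivative Li₂(-s)/(s(1+s)) on
(0,1). The closed form has the same derivative, by Li'ₘ₊₁(y) = Liₘ(y)/y and Li₁(y) = -log(1-y).
Both tend to 0 as s → 0⁺ (Li₂ and Li₃ are continuous on [-1,1], log s · log²(1+s) → 0), so they
agree on (0,1).
-/

open Topology

section PowerSeries

variable {c : ℕ → ℝ} {C : ℝ}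

theorem norm_div_succ_mul_pow_succ_le (hc : ∀ n, |c n| ≤ C) {y : ℝ} (hy : |y| ≤ 1) (n : ℕ) :
    ‖c n / (n + 1) * y ^ (n + 1)‖ ≤ C * |y| ^ n := by
  rw [norm_mul, norm_div, norm_pow, Real.norm_eq_abs, Real.norm_eq_abs,
    abs_of_pos (by positivity : (0 : ℝ) < n + 1), pow_succ]
  calc |c n| / (n + 1) * (|y| ^ n * |y|) ≤ |c n| * (|y| ^ n * 1) := by
        gcongr
        · exact div_le_self (abs_nonneg _) (by simp)
    _ ≤ C * |y| ^ n := by rw [mul_one]; gcongr; exact hc n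

theorem summable_div_succ_mul_pow_succ (hc : ∀ n, |c n| ≤ C) {y : ℝ} (hy : |y| < 1) :
    Summable fun n : ℕ => c n / (n + 1) * y ^ (n + 1) :=
  .of_norm_bounded ((summable_geometric_of_lt_one (abs_nonneg y) hy).mul_left C)
    (norm_div_succ_mul_pow_succ_le hc hy.le)

theorem hasDerivAt_tsum_div_succ_mul_pow_succ (hc : ∀ n, |c n| ≤ C) {y : ℝ} (hy : |y| < 1) :
    HasDerivAt (fun t => ∑' n : ℕ, c n / (n + 1) * t ^ (n + 1)) (∑' n : ℕ, c n * y ^ n) y := by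
  obtain ⟨r, hyr, hr1⟩ := exists_between hy
  have hr0 : 0 < r := (abs_nonneg y).trans_lt hyr
  have hC : 0 ≤ C := (abs_nonneg _).trans (hc 0)
  refine hasDerivAt_tsum_of_isPreconnected (u := fun n => C * r ^ n) (t := Set.Ioo (-r) r)
    (g := fun n t => c n / (n + 1) * t ^ (n + 1)) (g' := fun n t => c n * t ^ n)
    ((summable_geometric_of_lt_one hr0.le hr1).mul_left C) isOpen_Ioo
    isPreconnected_Ioo (fun n t _ => ?_) (fun n t ht => ?_) (y₀ := 0) ⟨by linarith, hr0⟩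
    ?_ (abs_lt.mp hyr)
  · refine ((hasDerivAt_pow (n + 1) t).const_mul (c n / (n + 1))).congr_deriv ?_
    push_cast
    field_simp
  · rw [norm_mul, norm_pow, Real.norm_eq_abs, Real.norm_eq_abs]
    gcongr
    · exact hc n
    · exact abs_lt.mpr ht |>.le
  · simp

end PowerSeries

theorem Li_eq_mul_tsum (m : ℕ) (y : ℝ) : Li m y = y * ∑' n : ℕ, y ^ n / ((n : ℝ) + 1) ^ m := by
  rw [Li, ← tsum_mul_left]
  congr 1 with n
  ring

theorem Li_succ_eq_tsum (m : ℕ) :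
    Li (m + 1) = fun y => ∑' n : ℕ, 1 / ((n : ℝ) + 1) ^ m / (n + 1) * y ^ (n + 1) := by
  ext y
  rw [Li]
  congr 1 with n
  field_simp
  ring

theorem hasDerivAt_Li_succ (m : ℕ) {y : ℝ} (hy : |y| < 1) (hy0 : y ≠ 0) :
    HasDerivAt (Li (m + 1)) (Li m y / y) y := by
  have hc (n : ℕ) : |1 / ((n : ℝ) + 1) ^ m| ≤ 1 := by
    rw [abs_of_pos (by positivity)]
    exact div_le_one_of_le₀ (one_le_pow₀ (by simp)) (by positivity)
  rw [Li_succ_eq_tsum]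
  convert hasDerivAt_tsum_div_succ_mul_pow_succ hc hy using 1
  rw [Li_eq_mul_tsum, mul_div_cancel_left₀ _ hy0]
  congr 1 with n
  ring

theorem Li_one_eq_neg_log {y : ℝ} (hy : |y| < 1) : Li 1 y = -log (1 - y) := by
  simpa [Li] using (Real.hasSum_pow_div_log_of_abs_lt_one hy).tsum_eq

theorem summable_one_div_succ_pow {m : ℕ} (hm : 2 ≤ m) :
    Summable fun n : ℕ => 1 / ((n : ℝ) + 1) ^ m := by
  simpa using (summable_nat_add_iff 1).mpr (Real.summable_one_div_nat_pow.mpr hm)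

theorem continuousOn_Li {m : ℕ} (hm : 2 ≤ m) : ContinuousOn (Li m) (Set.Icc (-1) 1) := by
  refine continuousOn_tsum (fun n => by fun_prop) (summable_one_div_succ_pow hm) fun n y hy => ?_
  rw [norm_div, norm_pow, norm_pow, Real.norm_eq_abs, Real.norm_eq_abs,
    abs_of_pos (by positivity : (0 : ℝ) < n + 1)]
  gcongr
  exact pow_le_one₀ (abs_nonneg y) (abs_le.mpr hy)

theorem Finset.sum_Icc_one_eq_sum_range {M : Type*} [AddCommMonoid M] (f : ℕ → M) (n : ℕ) :
    ∑ k ∈ Icc 1 n, f k = ∑ k ∈ range n, f (k + 1) := by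
  rw [range_eq_Ico, sum_Ico_add' f 0 n 1]
  rfl

theorem H_succ_eq_sum_range (p n : ℕ) :
    H p (n + 1) = ∑ k ∈ range (n + 1), 1 / ((k : ℝ) + 1) ^ p := by
  rw [H, Finset.sum_Icc_one_eq_sum_range]
  push_cast
  rfl

theorem abs_H_two_le (n : ℕ) : |H 2 n| ≤ ∑' j : ℕ, 1 / (j : ℝ) ^ 2 := by
  rw [abs_of_nonneg (by unfold H; positivity)]
  exact (Real.summable_one_div_nat_pow.mpr one_lt_two).sum_le_tsum _ (fun _ _ => by positivity)

theorem tsum_H_succ_mul_pow (p : ℕ) {y : ℝ} (hy : |y| < 1) :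
    ∑' n : ℕ, H p (n + 1) * y ^ n = (∑' n : ℕ, y ^ n / ((n : ℝ) + 1) ^ p) / (1 - y) := by
  have hgeom : Summable fun n : ℕ => ‖y ^ n‖ := by
    simpa using summable_geometric_of_lt_one (abs_nonneg y) hy
  have hterm : Summable fun n : ℕ => ‖y ^ n / ((n : ℝ) + 1) ^ p‖ := by
    refine hgeom.of_nonneg_of_le (fun _ => norm_nonneg _) fun n => ?_
    rw [norm_div, norm_pow, norm_pow, Real.norm_eq_abs, Real.norm_eq_abs,
      abs_of_pos (by positivity : (0 : ℝ) < n + 1)]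
    exact div_le_self (by positivity) (one_le_pow₀ (by simp))
  rw [div_eq_mul_inv, ← tsum_geometric_of_abs_lt_one hy,
    tsum_mul_tsum_eq_tsum_sum_range_of_summable_norm hterm hgeom]
  congr 1 with n
  rw [H_succ_eq_sum_range, Finset.sum_mul]
  refine Finset.sum_congr rfl fun k hk => ?_
  rw [div_mul_eq_mul_div (y ^ k), ← pow_add, Nat.add_sub_cancel' (Finset.mem_range_succ_iff.mp hk)]
  ring

theorem abs_one_div_one_add_lt_one {t : ℝ} (ht : 0 < t) : |1 / (1 + t)| < 1 := by
  rw [abs_of_pos (by positivity), div_lt_one (by positivity)]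
  linarith

noncomputable def harmonicSeries (t : ℝ) : ℝ := ∑' n : ℕ, H 2 (n + 1) / (n + 1) * t ^ (n + 1)

noncomputable def harmonicClosedForm (t : ℝ) : ℝ :=
  -Li 2 (-t) * log (1 + t) - log t * (log (1 + t)) ^ 2 + (2 / 3) * (log (1 + t)) ^ 3
    + 2 * log (1 + t) * Li 2 (1 / (1 + t)) + 2 * Li 3 (1 / (1 + t)) - 2 * Li 3 1 + Li 3 (-t)

theorem hasDerivAt_harmonicSeries {y : ℝ} (hy : |y| < 1) :
    HasDerivAt harmonicSeries (∑' n : ℕ, H 2 (n + 1) * y ^ n) y :=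
  hasDerivAt_tsum_div_succ_mul_pow_succ (fun n => abs_H_two_le (n + 1)) hy

theorem hasDerivAt_harmonicSeries_neg {t : ℝ} (ht0 : 0 < t) (ht1 : t < 1) :
    HasDerivAt (fun s => harmonicSeries (-s)) (Li 2 (-t) / (t * (1 + t))) t := by
  have hy : |-t| < 1 := (abs_neg t).trans_lt (abs_lt.mpr ⟨by linarith, ht1⟩)
  refine ((hasDerivAt_harmonicSeries hy).comp t (hasDerivAt_neg t)).congr_deriv ?_
  rw [tsum_H_succ_mul_pow 2 hy, Li_eq_mul_tsum, sub_neg_eq_add]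
  field_simp

theorem tendsto_harmonicSeries_neg_nhdsGT_zero :
    Tendsto (fun s => harmonicSeries (-s)) (𝓝[>] 0) (𝓝 0) := by
  have hcont : ContinuousAt (fun s => harmonicSeries (-s)) 0 :=
    ((hasDerivAt_harmonicSeries (by simp)).continuousAt).comp continuous_neg.continuousAt
  simpa [harmonicSeries] using hcont.tendsto.mono_left nhdsWithin_le_nhds

section ClosedFormDerivative

variable {t : ℝ}

theorem hasDerivAt_log_one_add (ht : 1 + t ≠ 0) :
    HasDerivAt (fun s => log (1 + s)) (1 / (1 + t)) t := by
  simpa using ((hasDerivAt_id t).const_add 1).log ht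

theorem hasDerivAt_one_div_one_add (ht : 1 + t ≠ 0) :
    HasDerivAt (fun s => 1 / (1 + s)) (-1 / (1 + t) ^ 2) t := by
  simp only [one_div]
  exact ((hasDerivAt_id t).const_add 1).inv ht

theorem hasDerivAt_Li_succ_neg (m : ℕ) (ht : |t| < 1) (ht0 : t ≠ 0) :
    HasDerivAt (fun s => Li (m + 1) (-s)) (Li m (-t) / t) t := by
  refine ((hasDerivAt_Li_succ m ((abs_neg t).trans_lt ht) (neg_ne_zero.mpr ht0)).comp t
    (hasDerivAt_neg t)).congr_deriv ?_
  field_simp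

theorem hasDerivAt_Li_succ_one_div_one_add (m : ℕ) (ht : 0 < t) :
    HasDerivAt (fun s => Li (m + 1) (1 / (1 + s))) (-Li m (1 / (1 + t)) / (1 + t)) t := by
  refine ((hasDerivAt_Li_succ m (abs_one_div_one_add_lt_one ht) (by positivity)).comp t
    (hasDerivAt_one_div_one_add (by positivity))).congr_deriv ?_
  field_simp

theorem Li_one_neg (ht : |t| < 1) : Li 1 (-t) = -log (1 + t) := by
  rw [Li_one_eq_neg_log ((abs_neg t).trans_lt ht), sub_neg_eq_add]

theorem Li_one_one_div_one_add (ht : 0 < t) :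
    Li 1 (1 / (1 + t)) = log (1 + t) - log t := by
  have hsub : 1 - 1 / (1 + t) = t / (1 + t) := by field_simp; ring
  rw [Li_one_eq_neg_log (abs_one_div_one_add_lt_one ht), hsub, log_div ht.ne' (by positivity)]
  ring

theorem hasDerivAt_harmonicClosedForm (ht0 : 0 < t) (ht1 : t < 1) :
    HasDerivAt harmonicClosedForm (Li 2 (-t) / (t * (1 + t))) t := by
  have ht : |t| < 1 := abs_lt.mpr ⟨by linarith, ht1⟩
  have hL := hasDerivAt_log_one_add (by positivity : 1 + t ≠ 0)
  have hsum := (((((((hasDerivAt_Li_succ_neg 1 ht ht0.ne').neg.mul hL).sub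
    ((hasDerivAt_log ht0.ne').mul (hL.pow 2))).add ((hL.pow 3).const_mul (2 / 3))).add
    ((hL.const_mul 2).mul (hasDerivAt_Li_succ_one_div_one_add 1 ht0))).add
    ((hasDerivAt_Li_succ_one_div_one_add 2 ht0).const_mul 2)).sub_const (2 * Li 3 1)).add
    (hasDerivAt_Li_succ_neg 2 ht ht0.ne')
  refine hsum.congr_deriv ?_
  rw [Li_one_neg ht, Li_one_one_div_one_add ht0, Pi.neg_apply, Pi.pow_apply]
  field_simp
  ring

end ClosedFormDerivative

theorem tendsto_log_one_add_nhds_zero : Tendsto (fun s => log (1 + s)) (𝓝 0) (𝓝 0) := by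
  have hcont : ContinuousAt (fun s : ℝ => log (1 + s)) 0 :=
    (continuousAt_const.add continuousAt_id).log (by norm_num)
  simpa using hcont.tendsto

theorem tendsto_log_mul_log_one_add_sq_nhdsGT_zero :
    Tendsto (fun s => log s * log (1 + s) ^ 2) (𝓝[>] 0) (𝓝 0) := by
  have hlim : Tendsto (fun s => |s * log s| * log (1 + s)) (𝓝[>] 0) (𝓝 0) := by
    simpa using ((Real.continuous_mul_log.tendsto 0).abs.mul
      tendsto_log_one_add_nhds_zero).mono_left nhdsWithin_le_nhds
  refine squeeze_zero_norm' ?_ hlim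
  filter_upwards [self_mem_nhdsWithin] with s (hs : 0 < s)
  have hL0 : 0 ≤ log (1 + s) := log_nonneg (by linarith)
  have hLs : log (1 + s) ≤ s := by linarith [log_le_sub_one_of_pos (by linarith : 0 < 1 + s)]
  calc ‖log s * log (1 + s) ^ 2‖ = |log s| * log (1 + s) * log (1 + s) := by
        rw [norm_mul, norm_pow, Real.norm_eq_abs, Real.norm_eq_abs, abs_of_nonneg hL0, sq,
          mul_assoc]
    _ ≤ |log s| * s * log (1 + s) := by gcongr
    _ = |s * log s| * log (1 + s) := by rw [abs_mul, abs_of_pos hs, mul_comm s]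

theorem tendsto_Li_neg_nhdsGT_zero {m : ℕ} (hm : 2 ≤ m) :
    Tendsto (fun s => Li m (-s)) (𝓝[>] 0) (𝓝 0) := by
  have hcont : ContinuousAt (Li m) 0 :=
    (continuousOn_Li hm).continuousAt (Icc_mem_nhds (by norm_num) (by norm_num))
  have hLi0 : Li m 0 = 0 := by simp [Li]
  simpa [hLi0, Function.comp_def] using
    (hcont.tendsto.comp (continuous_neg.tendsto' 0 0 neg_zero)).mono_left nhdsWithin_le_nhds

theorem tendsto_Li_one_div_one_add_nhdsGT_zero {m : ℕ} (hm : 2 ≤ m) :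
    Tendsto (fun s => Li m (1 / (1 + s))) (𝓝[>] 0) (𝓝 (Li m 1)) := by
  have hcont : ContinuousAt (fun s : ℝ => 1 / (1 + s)) 0 :=
    continuousAt_const.div (continuousAt_const.add continuousAt_id) (by norm_num)
  have hmem : ∀ᶠ s in 𝓝[>] (0 : ℝ), 1 / (1 + s) ∈ Set.Icc (-1) 1 := by
    filter_upwards [self_mem_nhdsWithin] with s (hs : 0 < s)
    constructor
    · linarith [show 0 < 1 / (1 + s) by positivity]
    · rw [div_le_one (by positivity)]
      linarith
  refine ((continuousOn_Li hm) 1 ⟨by norm_num, le_rfl⟩).tendsto.comp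
    (tendsto_nhdsWithin_iff.mpr ⟨?_, hmem⟩)
  simpa using hcont.tendsto.mono_left nhdsWithin_le_nhds

theorem tendsto_harmonicClosedForm_nhdsGT_zero :
    Tendsto harmonicClosedForm (𝓝[>] 0) (𝓝 0) := by
  have hL := tendsto_log_one_add_nhds_zero.mono_left (nhdsWithin_le_nhds (s := Set.Ioi 0))
  have hlim := (((((((tendsto_Li_neg_nhdsGT_zero le_rfl).neg.mul hL).sub
    tendsto_log_mul_log_one_add_sq_nhdsGT_zero).add ((hL.pow 3).const_mul (2 / 3))).add
    ((hL.const_mul 2).mul (tendsto_Li_one_div_one_add_nhdsGT_zero le_rfl))).add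
    ((tendsto_Li_one_div_one_add_nhdsGT_zero (m := 3) (by norm_num)).const_mul 2)).sub_const
    (2 * Li 3 1)).add (tendsto_Li_neg_nhdsGT_zero (m := 3) (by norm_num))
  unfold harmonicClosedForm
  convert hlim using 2
  ring

theorem eqOn_Ioo_of_hasDerivAt_of_tendsto_nhdsGT {f g f' : ℝ → ℝ} {a b l : ℝ} (hab : a < b)
    (hf : ∀ t ∈ Set.Ioo a b, HasDerivAt f (f' t) t) (hg : ∀ t ∈ Set.Ioo a b, HasDerivAt g (f' t) t)
    (hfa : Tendsto f (𝓝[>] a) (𝓝 l)) (hga : Tendsto g (𝓝[>] a) (𝓝 l)) :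
    Set.EqOn f g (Set.Ioo a b) := by
  obtain ⟨c, hc⟩ := isOpen_Ioo.exists_eq_add_of_deriv_eq isPreconnected_Ioo
    (fun t ht => (hf t ht).differentiableAt.differentiableWithinAt)
    (fun t ht => (hg t ht).differentiableAt.differentiableWithinAt)
    (fun t ht => by rw [(hf t ht).deriv, (hg t ht).deriv])
  have hfa' : Tendsto f (𝓝[>] a) (𝓝 (l + c)) :=
    (hga.add_const c).congr' (eventually_of_mem (Ioo_mem_nhdsGT hab) fun t ht => (hc ht).symm)
  have hc0 : c = 0 := by linarith [tendsto_nhds_unique hfa' hfa]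
  intro t ht
  simpa [hc0] using hc ht

theorem stmt7 (x : ℝ) (hx0 : 0 < x) (hx1 : x < 1) :
    Filter.Tendsto (fun N => ∑ n ∈ Finset.Icc 1 N, H 2 n / (n : ℝ) * (-x) ^ n)
      Filter.atTop
      (nhds (-Li 2 (-x) * Real.log (1 + x) - Real.log x * (Real.log (1 + x)) ^ 2
        + (2 / 3) * (Real.log (1 + x)) ^ 3
        + 2 * Real.log (1 + x) * Li 2 (1 / (1 + x))
        + 2 * Li 3 (1 / (1 + x)) - 2 * Li 3 1 + Li 3 (-x))) := by
  have hseries : HasSum (fun n : ℕ => H 2 (n + 1) / (n + 1) * (-x) ^ (n + 1))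
      (harmonicSeries (-x)) :=
    (summable_div_succ_mul_pow_succ (fun n => abs_H_two_le (n + 1))
      ((abs_neg x).trans_lt (abs_lt.mpr ⟨by linarith, hx1⟩))).hasSum
  have hclosed : harmonicSeries (-x) = harmonicClosedForm x :=
    eqOn_Ioo_of_hasDerivAt_of_tendsto_nhdsGT zero_lt_one
      (fun t ht => hasDerivAt_harmonicSeries_neg ht.1 ht.2)
      (fun t ht => hasDerivAt_harmonicClosedForm ht.1 ht.2)
      tendsto_harmonicSeries_neg_nhdsGT_zero tendsto_harmonicClosedForm_nhdsGT_zero ⟨hx0, hx1⟩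
  change Tendsto _ atTop (𝓝 (harmonicClosedForm x))
  rw [← hclosed]
  refine hseries.tendsto_sum_nat.congr fun N => ?_
  rw [Finset.sum_Icc_one_eq_sum_range]
  push_cast
  rfl
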